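/- arXiv:0902.0937 — 2 statements merged into one kernel-verified Lean document; each statement's English description precedes it below -/
import Mathlib

section
/- Let n ≥ 1 and let A be an MR-subalgebra of 𝓛ₙ with tp(A) = ⟨t₁, …, tₙ⟩, k = Σᵢ tᵢ and r = Σᵢ i·tᵢ. Then the orbit of A under the evaluation action of Aut(𝓛ₙ) on MR-subalgebras satisfies |Orb(A)| · ∏_{i=1}^{n} (i!)^{tᵢ} · tᵢ! = 2^{r−k} · C(n,r) · r!, where C(n,r) is the binomial coefficient. -/
@[ext] structure Cube (n : ℕ) where
  pos : Finset (Fin n)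
  neg : Finset (Fin n)
  disj : Disjoint pos neg

namespace Cube
variable {n : ℕ}

instance : PartialOrder (Cube n) where
  le x y := y.pos ⊆ x.pos ∧ y.neg ⊆ x.neg
  le_refl x := ⟨subset_rfl, subset_rfl⟩
  le_trans x y z h₁ h₂ := ⟨h₂.1.trans h₁.1, h₂.2.trans h₁.2⟩
  le_antisymm x y h₁ h₂ :=
    Cube.ext (subset_antisymm h₂.1 h₁.1) (subset_antisymm h₂.2 h₁.2)

instance : OrderTop (Cube n) where
  top := ⟨∅, ∅, by simp⟩
  le_top x := ⟨Finset.empty_subset _, Finset.empty_subset _⟩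

instance : SemilatticeSup (Cube n) where
  sup x y := ⟨x.pos ∩ y.pos, x.neg ∩ y.neg,
    x.disj.mono Finset.inter_subset_left Finset.inter_subset_left⟩
  le_sup_left x y := ⟨Finset.inter_subset_left, Finset.inter_subset_left⟩
  le_sup_right x y := ⟨Finset.inter_subset_right, Finset.inter_subset_right⟩
  sup_le x y z hx hy := ⟨Finset.subset_inter hx.1 hy.1, Finset.subset_inter hx.2 hy.2⟩

/-- The reflection `Δ(x, y)` of `y` through the centre of `x`. -/
def delta (x y : Cube n) : Cube n :=
  ⟨x.pos ∪ (y.neg \ x.neg), x.neg ∪ (y.pos \ x.pos), by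
    simp only [Finset.disjoint_union_left, Finset.disjoint_union_right]
    refine ⟨⟨x.disj, Finset.sdiff_disjoint⟩, Finset.disjoint_sdiff, ?_⟩
    exact y.disj.symm.mono Finset.sdiff_subset Finset.sdiff_subset⟩

lemma delta_le (x y : Cube n) : delta x y ≤ x :=
  ⟨Finset.subset_union_left, Finset.subset_union_left⟩

/-- The co-rank of a face of the `n`-cube. -/
def corank (x : Cube n) : ℕ := (x.pos ∪ x.neg).card

/-- The set of coatoms of `𝓛ₙ` lying above `a`. -/
def coatomsAbove (a : Cube n) : Set (Cube n) := {c | corank c = 1 ∧ a ≤ c}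

/-- `A` is an MR-subalgebra of `𝓛ₙ`. -/
def IsMRSub (A : Set (Cube n)) : Prop :=
  ⊤ ∈ A ∧ (∀ x ∈ A, ∀ y ∈ A, x ⊔ y ∈ A) ∧
    (∀ x ∈ A, ∀ y ∈ A, y ≤ x → delta x y ∈ A) ∧
    (∀ x ∈ A, ∀ y ∈ A, ∃ m ∈ A, IsGLB {x, delta (x ⊔ y) y} m)

/-- The coatoms of a subalgebra `A`: maximal elements of `A \ {⊤}`. -/
def coAt (A : Set (Cube n)) : Set (Cube n) :=
  {a | a ∈ A ∧ a ≠ ⊤ ∧ ∀ b ∈ A, b ≠ ⊤ → a ≤ b → b = a}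

/-- The coatoms `a` of `A` with `|𝒞ₐ| = i`. -/
def typeSet (A : Set (Cube n)) (i : ℕ) : Set (Cube n) :=
  {a | a ∈ coAt A ∧ (coatomsAbove a).ncard = i}

/-- An order automorphism of `𝓛ₙ` is a cubic automorphism when it preserves `Δ`. -/
def IsAut (φ : Cube n ≃o Cube n) : Prop :=
  ∀ x y : Cube n, y ≤ x → φ (delta x y) = delta (φ x) (φ y)

/-- The set of automorphisms of `𝓛ₙ`. -/
def AutSet (n : ℕ) : Set (Cube n ≃o Cube n) := {φ | IsAut φ}

/-- An automorphism of the subposet `A` preserving `Δ`. -/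
def IsSubAut {A : Set (Cube n)} (ψ : A ≃o A) : Prop :=
  ∀ (x y : A), (y : Cube n) ≤ (x : Cube n) → ∀ h : delta ↑x ↑y ∈ A,
    (ψ ⟨delta ↑x ↑y, h⟩ : Cube n) = delta ↑(ψ x) ↑(ψ y)

end Cube

/-!
An MR-subalgebra `A` is determined by its coatoms: `x ∈ A` iff every coordinate fixed by `x` is
fixed by some coatom of `A` above `x`. Both directions go by downward induction: for a coatom
`c ≥ x` of `A`, freeing the coordinates of `c` in `x` gives `x ⊔ hat (Δ(c, x))`, and `x` is the
meet of that face with `c`, which the caret produces. The coatoms form a *configuration*: a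
family closed under `y ↦ ŷ` whose supports are pairwise disjoint except for opposite faces, with
`2 tᵢ` members of co-rank `i`. Automorphisms preserve all of this, and signed permutations of
the coordinates act transitively on the configurations of a given type, so `A' ↦ CoAt(A')` is a
bijection from `Orb(A)` onto the configurations of type `t`. To count those, remove an opposite
pair `{a, â}` of co-rank `i`: `a` ranges over the `2^i C(|U|, i)` faces of co-rank `i` supported
in the free coordinates `U`, and each configuration contains `2 tᵢ` of them, so induction on `k`
gives `|configs| · ∏ᵢ (i!)^{tᵢ} tᵢ! · 2^k = 2^r · n!/(n-r)!`.
-/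

theorem Finset.exists_perm_map_eq {α : Type*} [DecidableEq α] {U s t : Finset α} (hs : s ⊆ U)
    (ht : t ⊆ U) (h : s.card = t.card) :
    ∃ σ : Equiv.Perm α, (∀ j ∉ U, σ j = j) ∧ s.map σ.toEmbedding = t := by
  have hcard : ∀ {r : Finset α}, r ⊆ U → (r.subtype (· ∈ U)).card = r.card := fun hr => by
    rw [Finset.card_subtype, Finset.filter_true_of_mem hr]
  obtain ⟨τ, hτ⟩ := (Set.powersetCard.isPretransitive (α := U) (n := s.card)).exists_smul_eq
    (Set.powersetCard.ofCard (hcard hs)) (Set.powersetCard.ofCard ((hcard ht).trans h.symm))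
  refine ⟨Equiv.Perm.ofSubtype τ, fun j hj => Equiv.Perm.ofSubtype_apply_of_not_mem τ hj, ?_⟩
  have himg : ∀ j ∈ s, Equiv.Perm.ofSubtype τ j ∈ t := by
    intro j hj
    have hmem : τ ⟨j, hs hj⟩ ∈ t.subtype (· ∈ U) := by
      rw [← Set.powersetCard.val_ofCard ((hcard ht).trans h.symm), ← hτ,
        Set.powersetCard.coe_smul, Finset.mem_smul_finset]
      exact ⟨⟨j, hs hj⟩, by simpa using hj, rfl⟩
    rw [Equiv.Perm.ofSubtype_apply_of_mem τ (hs hj)]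
    simpa using hmem
  refine Finset.eq_of_subset_of_card_le (fun j hj => ?_) (by simp [h])
  obtain ⟨i, hi, rfl⟩ := Finset.mem_map.1 hj
  exact himg i hi

@[to_additive]
lemma Finset.prod_apply_update {ι α M : Type*} [CommMonoid M] [DecidableEq ι] {s : Finset ι}
    {i : ι} (hi : i ∈ s) (g : ι → α → M) (t : ι → α) (v : α) :
    ∏ j ∈ s, g j (Function.update t i v j) = g i v * ∏ j ∈ s.erase i, g j (t j) := by
  rw [← Finset.mul_prod_erase s _ hi, Function.update_self]
  exact congrArg _ (Finset.prod_congr rfl fun j hj => by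
    rw [Function.update_of_ne (Finset.ne_of_mem_erase hj)])

namespace Cube

section Basic

variable {n : ℕ} {x y c : Cube n}

instance : DecidableEq (Cube n) := fun x y =>
  decidable_of_iff (x.pos = y.pos ∧ x.neg = y.neg) Cube.ext_iff.symm

noncomputable instance : Fintype (Cube n) :=
  Fintype.ofInjective (fun x => (x.pos, x.neg)) fun x y h => by
    cases x; cases y; cases h; rfl

lemma le_def : x ≤ y ↔ y.pos ⊆ x.pos ∧ y.neg ⊆ x.neg := Iff.rfl

@[simp] lemma top_pos : (⊤ : Cube n).pos = ∅ := rfl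
@[simp] lemma top_neg : (⊤ : Cube n).neg = ∅ := rfl
@[simp] lemma sup_pos (x y : Cube n) : (x ⊔ y).pos = x.pos ∩ y.pos := rfl
@[simp] lemma sup_neg (x y : Cube n) : (x ⊔ y).neg = x.neg ∩ y.neg := rfl
@[simp] lemma delta_pos (x y : Cube n) : (delta x y).pos = x.pos ∪ (y.neg \ x.neg) := rfl
@[simp] lemma delta_neg (x y : Cube n) : (delta x y).neg = x.neg ∪ (y.pos \ x.pos) := rfl

lemma notMem_neg_of_mem_pos {j : Fin n} (h : j ∈ x.pos) : j ∉ x.neg :=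
  Finset.disjoint_left.1 x.disj h

lemma eq_top_iff' : x = ⊤ ↔ x.pos = ∅ ∧ x.neg = ∅ := by
  cases x; simp [Cube.ext_iff]

def hat (x : Cube n) : Cube n := ⟨x.neg, x.pos, x.disj.symm⟩

@[simp] lemma hat_pos (x : Cube n) : (hat x).pos = x.neg := rfl
@[simp] lemma hat_neg (x : Cube n) : (hat x).neg = x.pos := rfl
@[simp] lemma hat_hat (x : Cube n) : hat (hat x) = x := rfl

@[simp] lemma hat_le_hat_iff : hat x ≤ hat y ↔ x ≤ y := and_comm

@[simp] lemma hat_eq_top_iff : hat x = ⊤ ↔ x = ⊤ := by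
  simp [eq_top_iff', and_comm]

lemma delta_top (x : Cube n) : delta ⊤ x = hat x := by
  ext <;> simp

def supp (x : Cube n) : Finset (Fin n) := x.pos ∪ x.neg

lemma corank_eq_card_supp (x : Cube n) : corank x = (supp x).card := rfl

@[simp] lemma supp_hat (x : Cube n) : supp (hat x) = supp x := Finset.union_comm _ _

lemma supp_eq_empty_iff : supp x = ∅ ↔ x = ⊤ := by
  simp [supp, eq_top_iff']

lemma supp_nonempty_iff : (supp x).Nonempty ↔ x ≠ ⊤ := by
  rw [Finset.nonempty_iff_ne_empty, Ne, supp_eq_empty_iff]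

lemma supp_subset_of_le (h : x ≤ y) : supp y ⊆ supp x :=
  Finset.union_subset_union h.1 h.2

lemma eq_of_le_of_supp_eq (h : x ≤ y) (hs : supp y = supp x) : x = y := by
  have hpos : x.pos ⊆ y.pos := fun j hj => by
    have : j ∈ supp y := hs ▸ Finset.mem_union_left _ hj
    exact (Finset.mem_union.1 this).resolve_right fun h' => notMem_neg_of_mem_pos hj (h.2 h')
  have hneg : x.neg ⊆ y.neg := fun j hj => by
    have : j ∈ supp y := hs ▸ Finset.mem_union_right _ hj
    exact (Finset.mem_union.1 this).resolve_left fun h' => notMem_neg_of_mem_pos (h.1 h') hj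
  exact Cube.ext (hpos.antisymm h.1) (hneg.antisymm h.2)

lemma supp_ssubset_of_lt (h : x < y) : supp y ⊂ supp x :=
  (supp_subset_of_le h.le).ssubset_of_ne fun hs => h.ne (eq_of_le_of_supp_eq h.le hs)

lemma disjoint_supp_iff : Disjoint (supp x) (supp y) ↔ x ⊔ y = ⊤ ∧ x ⊔ hat y = ⊤ := by
  simp only [eq_top_iff', sup_pos, sup_neg, hat_pos, hat_neg, supp, Finset.disjoint_union_left,
    Finset.disjoint_union_right, ← Finset.disjoint_iff_inter_eq_empty]
  tauto

def posC (j : Fin n) : Cube n := ⟨{j}, ∅, by simp⟩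
def negC (j : Fin n) : Cube n := ⟨∅, {j}, by simp⟩

lemma le_posC_iff {j : Fin n} : x ≤ posC j ↔ j ∈ x.pos := by simp [le_def, posC]
lemma le_negC_iff {j : Fin n} : x ≤ negC j ↔ j ∈ x.neg := by simp [le_def, negC]
@[simp] lemma supp_posC (j : Fin n) : supp (posC j) = {j} := by simp [supp, posC]
@[simp] lemma supp_negC (j : Fin n) : supp (negC j) = {j} := by simp [supp, negC]

lemma posC_injective : Function.Injective (posC (n := n)) := fun i j h => by
  simpa [posC] using congrArg Cube.pos h

lemma negC_injective : Function.Injective (negC (n := n)) := fun i j h => by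
  simpa [negC] using congrArg Cube.neg h

lemma exists_le_supp_eq_singleton {j : Fin n} (hj : j ∈ supp x) :
    ∃ c, x ≤ c ∧ supp c = {j} := by
  rcases Finset.mem_union.1 hj with hj | hj
  · exact ⟨posC j, le_posC_iff.2 hj, supp_posC j⟩
  · exact ⟨negC j, le_negC_iff.2 hj, supp_negC j⟩

lemma posC_ne_top (j : Fin n) : posC j ≠ ⊤ := supp_nonempty_iff.1 (by simp)
lemma negC_ne_top (j : Fin n) : negC j ≠ ⊤ := supp_nonempty_iff.1 (by simp)

lemma eq_posC_or_negC_of_isCoatom (hc : IsCoatom c) {j : Fin n} (hj : j ∈ supp c) :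
    c = posC j ∨ c = negC j := by
  rcases Finset.mem_union.1 hj with hj | hj
  · exact Or.inl ((hc.le_iff.1 (le_posC_iff.2 hj)).resolve_left (posC_ne_top j)).symm
  · exact Or.inr ((hc.le_iff.1 (le_negC_iff.2 hj)).resolve_left (negC_ne_top j)).symm

lemma isCoatom_iff_corank_eq_one : IsCoatom c ↔ corank c = 1 := by
  constructor
  · intro hc
    obtain ⟨j, hj⟩ := supp_nonempty_iff.2 hc.1
    rcases eq_posC_or_negC_of_isCoatom hc hj with rfl | rfl <;> simp [corank_eq_card_supp]
  · intro hc
    obtain ⟨j, hj⟩ := Finset.card_eq_one.1 ((corank_eq_card_supp c).symm.trans hc)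
    refine ⟨by rw [← supp_nonempty_iff, hj]; simp, fun d hcd => ?_⟩
    have := supp_ssubset_of_lt hcd
    rwa [hj, Finset.ssubset_singleton_iff, supp_eq_empty_iff] at this

lemma coatomsAbove_eq (a : Cube n) : coatomsAbove a = posC '' a.pos ∪ negC '' a.neg := by
  ext c
  simp only [coatomsAbove, ← isCoatom_iff_corank_eq_one, Set.mem_ofPred_eq, Set.mem_union,
    Set.mem_image, Finset.mem_coe]
  constructor
  · rintro ⟨hc, hac⟩
    obtain ⟨j, hj⟩ := supp_nonempty_iff.2 hc.1
    rcases eq_posC_or_negC_of_isCoatom hc hj with rfl | rfl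
    · exact Or.inl ⟨j, le_posC_iff.1 hac, rfl⟩
    · exact Or.inr ⟨j, le_negC_iff.1 hac, rfl⟩
  · rintro (⟨j, hj, rfl⟩ | ⟨j, hj, rfl⟩)
    · exact ⟨isCoatom_iff_corank_eq_one.2 (by simp [corank_eq_card_supp]), le_posC_iff.2 hj⟩
    · exact ⟨isCoatom_iff_corank_eq_one.2 (by simp [corank_eq_card_supp]), le_negC_iff.2 hj⟩

lemma ncard_coatomsAbove (a : Cube n) : (coatomsAbove a).ncard = corank a := by
  have hdisj : Disjoint (posC '' (a.pos : Set (Fin n))) (negC '' a.neg) := by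
    rw [Set.disjoint_iff]
    rintro _ ⟨⟨i, -, rfl⟩, ⟨j, -, h⟩⟩
    simpa [posC, negC] using congrArg Cube.pos h
  rw [coatomsAbove_eq, Set.ncard_union_eq hdisj, Set.ncard_image_of_injective _ posC_injective,
    Set.ncard_image_of_injective _ negC_injective, Set.ncard_coe_finset, Set.ncard_coe_finset,
    corank_eq_card_supp, supp, Finset.card_union_of_disjoint a.disj]

@[simp] lemma corank_hat (x : Cube n) : corank (hat x) = corank x := by
  simp [corank_eq_card_supp]

lemma corank_ne_zero (h : x ≠ ⊤) : corank x ≠ 0 := by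
  rwa [corank_eq_card_supp, Ne, Finset.card_eq_zero, supp_eq_empty_iff]

lemma hat_ne_self (h : x ≠ ⊤) : hat x ≠ x := fun he => by
  obtain ⟨j, hj⟩ := supp_nonempty_iff.2 h
  rcases Finset.mem_union.1 hj with hj | hj
  · exact notMem_neg_of_mem_pos hj (he ▸ hj : j ∈ (hat x).pos)
  · exact notMem_neg_of_mem_pos (he ▸ hj : j ∈ (hat x).neg) hj

end Basic

section Erase

variable {n : ℕ} {x c : Cube n}

def erase (x : Cube n) (s : Finset (Fin n)) : Cube n :=
  ⟨x.pos \ s, x.neg \ s, x.disj.mono Finset.sdiff_subset Finset.sdiff_subset⟩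

lemma le_erase (x : Cube n) (s : Finset (Fin n)) : x ≤ x.erase s :=
  ⟨Finset.sdiff_subset, Finset.sdiff_subset⟩

lemma supp_erase (x : Cube n) (s : Finset (Fin n)) : supp (x.erase s) = supp x \ s :=
  (Finset.union_sdiff_distrib _ _ _).symm

lemma erase_le_of_disjoint (h : x ≤ c) (hs : Disjoint (supp c) s) : x.erase s ≤ c :=
  ⟨Finset.subset_sdiff.2 ⟨h.1, Finset.disjoint_of_subset_left Finset.subset_union_left hs⟩,
    Finset.subset_sdiff.2 ⟨h.2, Finset.disjoint_of_subset_left Finset.subset_union_right hs⟩⟩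

lemma lt_erase_supp (h : x ≤ c) (hc : c ≠ ⊤) : x < x.erase (supp c) := by
  refine (le_erase _ _).lt_of_ne fun he => ?_
  obtain ⟨j, hj⟩ := supp_nonempty_iff.2 hc
  have : j ∈ supp (x.erase (supp c)) := he ▸ supp_subset_of_le h hj
  simp [supp_erase, hj] at this

lemma sup_hat_delta_eq_erase (h : x ≤ c) : x ⊔ hat (delta c x) = x.erase (supp c) := by
  ext j <;> simp only [sup_pos, sup_neg, hat_pos, hat_neg, delta_pos, delta_neg, erase, supp,
    Finset.mem_inter, Finset.mem_union, Finset.mem_sdiff]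
  · have := @notMem_neg_of_mem_pos _ x j
    have := @h.2 j
    tauto
  · have := @notMem_neg_of_mem_pos _ x j
    have := @h.1 j
    tauto

lemma erase_supp_sup_hat (x c : Cube n) : x.erase (supp c) ⊔ hat c = ⊤ := by
  rw [eq_top_iff']
  constructor <;> ext j <;> simp only [sup_pos, sup_neg, hat_pos, hat_neg, erase, supp,
    Finset.mem_inter, Finset.mem_union, Finset.mem_sdiff, Finset.notMem_empty, iff_false] <;>
    tauto

lemma isGLB_erase_supp (h : x ≤ c) : IsGLB {x.erase (supp c), c} x := by
  refine ⟨by rintro z (rfl | rfl); exacts [le_erase _ _, h], fun z hz => ?_⟩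
  simp only [mem_lowerBounds, Set.mem_insert_iff, Set.mem_singleton_iff, forall_eq_or_imp,
    forall_eq] at hz
  obtain ⟨⟨hzp, hzn⟩, hzc⟩ := hz
  refine ⟨fun j hj => ?_, fun j hj => ?_⟩
  · by_cases hjc : j ∈ c.pos
    · exact hzc.1 hjc
    · refine hzp (Finset.mem_sdiff.2 ⟨hj, ?_⟩)
      simp only [supp, Finset.mem_union, not_or]
      exact ⟨hjc, fun h' => notMem_neg_of_mem_pos hj (h.2 h')⟩
  · by_cases hjc : j ∈ c.neg
    · exact hzc.2 hjc
    · refine hzn (Finset.mem_sdiff.2 ⟨hj, ?_⟩)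
      simp only [supp, Finset.mem_union, not_or]
      exact ⟨fun h' => notMem_neg_of_mem_pos (h.1 h') hj, hjc⟩

end Erase

section MRSubalgebra

variable {n : ℕ} {A : Set (Cube n)} {x y a b c : Cube n}

lemma exists_mem_coAt_le (hx : x ∈ A) (hxt : x ≠ ⊤) : ∃ c ∈ coAt A, x ≤ c := by
  obtain ⟨c, hxc, hc⟩ := (Set.toFinite {y ∈ A | y ≠ ⊤}).exists_le_maximal ⟨hx, hxt⟩
  exact ⟨c, ⟨hc.1.1, hc.1.2, fun b hb hbt hcb => (hc.2 ⟨hb, hbt⟩ hcb).antisymm hcb⟩, hxc⟩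

namespace IsMRSub

lemma top_mem (hA : IsMRSub A) : ⊤ ∈ A := hA.1

lemma sup_mem (hA : IsMRSub A) (hx : x ∈ A) (hy : y ∈ A) : x ⊔ y ∈ A := hA.2.1 x hx y hy

lemma delta_mem (hA : IsMRSub A) (hx : x ∈ A) (hy : y ∈ A) (h : y ≤ x) : delta x y ∈ A :=
  hA.2.2.1 x hx y hy h

lemma exists_isGLB (hA : IsMRSub A) (hx : x ∈ A) (hy : y ∈ A) :
    ∃ m ∈ A, IsGLB {x, delta (x ⊔ y) y} m :=
  hA.2.2.2 x hx y hy

lemma hat_mem (hA : IsMRSub A) (hx : x ∈ A) : hat x ∈ A :=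
  delta_top x ▸ hA.delta_mem hA.top_mem hx le_top

lemma erase_supp_mem (hA : IsMRSub A) (hx : x ∈ A) (hc : c ∈ A) (h : x ≤ c) :
    x.erase (supp c) ∈ A :=
  sup_hat_delta_eq_erase h ▸ hA.sup_mem hx (hA.hat_mem (hA.delta_mem hc hx h))

/-- The caret of `y` and `hat c` is the meet of `y` and `c` as soon as `y ⊔ hat c = ⊤`. -/
lemma mem_of_isGLB (hA : IsMRSub A) (hy : y ∈ A) (hc : c ∈ A) (htop : y ⊔ hat c = ⊤)
    (hx : IsGLB {y, c} x) : x ∈ A := by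
  obtain ⟨m, hm, hglb⟩ := hA.exists_isGLB hy (hA.hat_mem hc)
  rw [htop, delta_top, hat_hat] at hglb
  exact hglb.unique hx ▸ hm

lemma hat_mem_coAt (hA : IsMRSub A) (ha : a ∈ coAt A) : hat a ∈ coAt A := by
  refine ⟨hA.hat_mem ha.1, by simpa using ha.2.1, fun b hb hbt hab => ?_⟩
  have := ha.2.2 (hat b) (hA.hat_mem hb) (by simpa using hbt)
    (by rw [← hat_le_hat_iff, hat_hat]; exact hab)
  rw [← this, hat_hat]

lemma sup_eq_top_of_mem_coAt (hA : IsMRSub A) (ha : a ∈ coAt A) (hb : b ∈ coAt A) (hab : b ≠ a) :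
    a ⊔ b = ⊤ := by
  by_contra h
  have hba : b ≤ a := sup_eq_left.1 (ha.2.2 _ (hA.sup_mem ha.1 hb.1) h le_sup_left)
  exact hab (hb.2.2 a ha.1 ha.2.1 hba).symm

lemma disjoint_supp_of_mem_coAt (hA : IsMRSub A) (ha : a ∈ coAt A) (hb : b ∈ coAt A)
    (hab : b ≠ a) (hab' : b ≠ hat a) : Disjoint (supp a) (supp b) :=
  disjoint_supp_iff.2 ⟨hA.sup_eq_top_of_mem_coAt ha hb hab,
    hA.sup_eq_top_of_mem_coAt ha (hA.hat_mem_coAt hb) fun h => hab' (by rw [← h, hat_hat])⟩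

end IsMRSub

def IsCovered (C : Set (Cube n)) (x : Cube n) : Prop :=
  ∀ j ∈ supp x, ∃ c ∈ C, x ≤ c ∧ j ∈ supp c

lemma IsMRSub.isCovered_coAt (hA : IsMRSub A) (hx : x ∈ A) : IsCovered (coAt A) x := by
  induction x using WellFoundedGT.induction with
  | _ x ih =>
  intro j hj
  obtain ⟨c, hc, hxc⟩ := exists_mem_coAt_le hx (supp_nonempty_iff.1 ⟨j, hj⟩)
  by_cases hjc : j ∈ supp c
  · exact ⟨c, hc, hxc, hjc⟩
  obtain ⟨d, hd, hd_le, hjd⟩ := ih _ (lt_erase_supp hxc hc.2.1) (hA.erase_supp_mem hx hc.1 hxc) j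
    (by simp [supp_erase, hj, hjc])
  exact ⟨d, hd, (le_erase _ _).trans hd_le, hjd⟩

lemma IsMRSub.mem_of_isCovered (hA : IsMRSub A) (hx : IsCovered (coAt A) x) : x ∈ A := by
  induction x using WellFoundedGT.induction with
  | _ x ih =>
  rcases eq_or_ne x ⊤ with rfl | hxt
  · exact hA.top_mem
  obtain ⟨j, hj⟩ := supp_nonempty_iff.2 hxt
  obtain ⟨c, hc, hxc, -⟩ := hx j hj
  refine hA.mem_of_isGLB (ih _ (lt_erase_supp hxc hc.2.1) fun i hi => ?_) hc.1
    (erase_supp_sup_hat x c) (isGLB_erase_supp hxc)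
  rw [supp_erase, Finset.mem_sdiff] at hi
  obtain ⟨d, hd, hxd, hid⟩ := hx i hi.1
  have hcd : Disjoint (supp c) (supp d) := hA.disjoint_supp_of_mem_coAt hc hd
    (by rintro rfl; exact hi.2 hid) (by rintro rfl; exact hi.2 (by simpa using hid))
  exact ⟨d, hd, erase_le_of_disjoint hxd hcd.symm, hid⟩

theorem IsMRSub.eq_of_coAt_eq {B : Set (Cube n)} (hA : IsMRSub A) (hB : IsMRSub B)
    (h : coAt A = coAt B) : A = B := by
  ext x
  exact ⟨fun hx => hB.mem_of_isCovered (h ▸ hA.isCovered_coAt hx),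
    fun hx => hA.mem_of_isCovered (h ▸ hB.isCovered_coAt hx)⟩

end MRSubalgebra

section Automorphisms

variable {n : ℕ} {A : Set (Cube n)} {U : Finset (Fin n)} {φ ψ : Cube n ≃o Cube n}
  {x y a b : Cube n}

lemma IsAut.trans (hφ : IsAut φ) (hψ : IsAut ψ) : IsAut (φ.trans ψ) := fun x y h => by
  simp only [OrderIso.trans_apply, hφ x y h, hψ _ _ (φ.monotone h)]

lemma IsAut.map_hat (hφ : IsAut φ) (x : Cube n) : φ (hat x) = hat (φ x) := by
  simpa only [delta_top, OrderIso.map_top] using hφ ⊤ x le_top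

lemma coatomsAbove_map (φ : Cube n ≃o Cube n) (a : Cube n) :
    coatomsAbove (φ a) = φ '' coatomsAbove a := by
  ext c
  obtain ⟨d, rfl⟩ := φ.surjective c
  simp [coatomsAbove, ← isCoatom_iff_corank_eq_one, φ.isCoatom_iff]

lemma corank_map (φ : Cube n ≃o Cube n) (x : Cube n) : corank (φ x) = corank x := by
  rw [← ncard_coatomsAbove, ← ncard_coatomsAbove, coatomsAbove_map,
    Set.ncard_image_of_injective _ φ.injective]

lemma coAt_image (φ : Cube n ≃o Cube n) (A : Set (Cube n)) : coAt (φ '' A) = φ '' coAt A := by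
  ext c
  obtain ⟨d, rfl⟩ := φ.surjective c
  simp [coAt, -Set.sep_and]

lemma IsMRSub.image (hA : IsMRSub A) (hφ : IsAut φ) : IsMRSub (φ '' A) := by
  refine ⟨⟨⊤, hA.top_mem, φ.map_top⟩, ?_, ?_, ?_⟩
  · rintro _ ⟨x, hx, rfl⟩ _ ⟨y, hy, rfl⟩
    exact ⟨x ⊔ y, hA.sup_mem hx hy, φ.map_sup x y⟩
  · rintro _ ⟨x, hx, rfl⟩ _ ⟨y, hy, rfl⟩ h
    rw [φ.le_iff_le] at h
    exact ⟨delta x y, hA.delta_mem hx hy h, hφ x y h⟩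
  · rintro _ ⟨x, hx, rfl⟩ _ ⟨y, hy, rfl⟩
    obtain ⟨m, hm, hglb⟩ := hA.exists_isGLB hx hy
    refine ⟨φ m, ⟨m, hm, rfl⟩, ?_⟩
    rw [← φ.map_sup, ← hφ _ _ le_sup_right, ← Set.image_pair]
    exact φ.isGLB_image'.2 hglb

lemma supp_map_subset (hφ : ∀ x, Disjoint (supp x) U → φ x = x)
    (hx : supp x ⊆ U) : supp (φ x) ⊆ U := by
  intro j hj
  by_contra hjU
  obtain ⟨c, hc, hcj⟩ := exists_le_supp_eq_singleton hj
  have hxc : x ≤ c := by rwa [← φ.le_iff_le, hφ c (by simpa [hcj])]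
  exact hjU (hx (supp_subset_of_le hxc (by simp [hcj])))

def permute (σ : Equiv.Perm (Fin n)) : Cube n ≃o Cube n where
  toFun x := ⟨x.pos.map σ.toEmbedding, x.neg.map σ.toEmbedding, (Finset.disjoint_map _).2 x.disj⟩
  invFun x := ⟨x.pos.map σ.symm.toEmbedding, x.neg.map σ.symm.toEmbedding,
    (Finset.disjoint_map _).2 x.disj⟩
  left_inv x := by ext <;> simp
  right_inv x := by ext <;> simp
  map_rel_iff' := by simp [le_def]

@[simp] lemma permute_pos (σ : Equiv.Perm (Fin n)) (x : Cube n) :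
    (permute σ x).pos = x.pos.map σ.toEmbedding := rfl
@[simp] lemma permute_neg (σ : Equiv.Perm (Fin n)) (x : Cube n) :
    (permute σ x).neg = x.neg.map σ.toEmbedding := rfl

lemma supp_permute (σ : Equiv.Perm (Fin n)) (x : Cube n) :
    supp (permute σ x) = (supp x).map σ.toEmbedding :=
  (Finset.map_union _ _).symm

lemma isAut_permute (σ : Equiv.Perm (Fin n)) : IsAut (permute σ) := fun x y _ => by
  ext <;> simp [Finset.map_union, Finset.map_sdiff]

lemma permute_eq_self {σ : Equiv.Perm (Fin n)} (h : ∀ j ∈ supp x, σ j = j) : permute σ x = x := by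
  have hfix : ∀ r ⊆ supp x, r.map σ.toEmbedding = r := fun r hr => by
    rw [Finset.map_eq_image]
    exact (Finset.image_congr fun j hj => h j (hr hj)).trans Finset.image_id
  exact Cube.ext (hfix _ Finset.subset_union_left) (hfix _ Finset.subset_union_right)

def reflect (s : Finset (Fin n)) : Cube n ≃o Cube n where
  toEquiv := Function.Involutive.toPerm
    (fun x => ⟨x.pos \ s ∪ x.neg ∩ s, x.neg \ s ∪ x.pos ∩ s, by
      rw [Finset.disjoint_left]
      intro j
      have := @notMem_neg_of_mem_pos _ x j
      simp only [Finset.mem_union, Finset.mem_sdiff, Finset.mem_inter]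
      tauto⟩)
    (fun x => by
      ext j <;> simp only [Finset.mem_union, Finset.mem_sdiff, Finset.mem_inter] <;> tauto)
  map_rel_iff' {x y} := by
    simp only [Function.Involutive.toPerm, Equiv.coe_fn_mk, le_def, Finset.subset_iff,
      Finset.mem_union, Finset.mem_sdiff, Finset.mem_inter]
    refine ⟨fun ⟨h₁, h₂⟩ => ⟨fun j => ?_, fun j => ?_⟩,
      fun ⟨h₁, h₂⟩ => ⟨fun j => ?_, fun j => ?_⟩⟩ <;> have := @h₁ j <;> have := @h₂ j <;> tauto

@[simp] lemma reflect_pos (s : Finset (Fin n)) (x : Cube n) :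
    (reflect s x).pos = x.pos \ s ∪ x.neg ∩ s := rfl
@[simp] lemma reflect_neg (s : Finset (Fin n)) (x : Cube n) :
    (reflect s x).neg = x.neg \ s ∪ x.pos ∩ s := rfl

lemma isAut_reflect (s : Finset (Fin n)) : IsAut (reflect s) := fun x y _ => by
  ext j <;> simp only [reflect_pos, reflect_neg, delta_pos, delta_neg, Finset.mem_union,
    Finset.mem_sdiff, Finset.mem_inter] <;> tauto

lemma reflect_eq_self {s : Finset (Fin n)} (h : Disjoint (supp x) s) : reflect s x = x := by
  ext j <;> simp only [reflect_pos, reflect_neg, Finset.mem_union, Finset.mem_sdiff,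
    Finset.mem_inter] <;> have := @Finset.disjoint_left.1 h j <;>
    simp only [supp, Finset.mem_union] at this <;> tauto

lemma reflect_symmDiff (h : supp x = supp y) : reflect (symmDiff x.pos y.pos) x = y := by
  have hx := @notMem_neg_of_mem_pos _ x
  have hy := @notMem_neg_of_mem_pos _ y
  have hxy : ∀ j, j ∈ x.pos ∨ j ∈ x.neg ↔ j ∈ y.pos ∨ j ∈ y.neg := fun j => by
    simpa [supp] using congrArg (j ∈ ·) h
  ext j <;> simp only [reflect_pos, reflect_neg, Finset.mem_union, Finset.mem_sdiff,
    Finset.mem_inter, Finset.mem_symmDiff] <;> grind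

lemma exists_isAut_apply_eq (ha : supp a ⊆ U) (hb : supp b ⊆ U)
    (h : corank a = corank b) :
    ∃ φ, IsAut φ ∧ (∀ x, Disjoint (supp x) U → φ x = x) ∧ φ a = b := by
  obtain ⟨σ, hσU, hσ⟩ := Finset.exists_perm_map_eq ha hb h
  have hsupp : supp (permute σ a) = supp b := (supp_permute σ a).trans hσ
  refine ⟨(permute σ).trans (reflect (symmDiff (permute σ a).pos b.pos)),
    (isAut_permute σ).trans (isAut_reflect _), fun x hx => ?_, reflect_symmDiff hsupp⟩
  have hsd : symmDiff (permute σ a).pos b.pos ⊆ U := by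
    refine Finset.symmDiff_subset_union.trans (Finset.union_subset ?_ ?_)
    · exact (Finset.subset_union_left.trans hsupp.le).trans hb
    · exact Finset.subset_union_left.trans hb
  rw [OrderIso.trans_apply, permute_eq_self fun j hj => hσU j (Finset.disjoint_left.1 hx hj),
    reflect_eq_self (hx.mono_right hsd)]

end Automorphisms

section Configurations

open Finset

variable {n : ℕ} {U : Finset (Fin n)} {C D : Finset (Cube n)} {a x : Cube n}

/-- The shape of the coatom set of an MR-subalgebra, with all supports inside `U`. -/
structure IsConfig (U : Finset (Fin n)) (C : Finset (Cube n)) : Prop where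
  ne_top : ∀ a ∈ C, a ≠ ⊤
  supp_subset : ∀ a ∈ C, supp a ⊆ U
  hat_mem : ∀ a ∈ C, hat a ∈ C
  disjoint : ∀ a ∈ C, ∀ b ∈ C, b ≠ a → b ≠ hat a → Disjoint (supp a) (supp b)

def typeCount (C : Finset (Cube n)) (i : ℕ) : ℕ := #{a ∈ C | corank a = i}

def pair (a : Cube n) : Finset (Cube n) := {a, hat a}

lemma mem_pair {b : Cube n} : b ∈ pair a ↔ b = a ∨ b = hat a := by simp [pair]

lemma typeCount_union (h : Disjoint C D) (i : ℕ) :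
    typeCount (C ∪ D) i = typeCount C i + typeCount D i := by
  rw [typeCount, filter_union, card_union_of_disjoint (disjoint_filter_filter h)]; rfl

lemma typeCount_pair (ha : a ≠ ⊤) (i : ℕ) :
    typeCount (pair a) i = if corank a = i then 2 else 0 := by
  by_cases h : corank a = i <;>
    simp [typeCount, pair, filter_insert, filter_singleton, h, (hat_ne_self ha).symm]

lemma typeCount_image (φ : Cube n ≃o Cube n) (C : Finset (Cube n)) (i : ℕ) :
    typeCount (C.image φ) i = typeCount C i := by
  rw [typeCount, filter_image, card_image_of_injective _ φ.injective]
  simp [typeCount, corank_map]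

lemma typeCount_corank_pos (ha : a ∈ C) : 0 < typeCount C (corank a) :=
  card_pos.2 ⟨a, mem_filter.2 ⟨ha, rfl⟩⟩

lemma exists_mem_corank_eq {i : ℕ} (h : 0 < typeCount C i) : ∃ a ∈ C, corank a = i := by
  obtain ⟨a, ha⟩ := card_pos.1 h
  exact ⟨a, (mem_filter.1 ha).1, (mem_filter.1 ha).2⟩

lemma eq_empty_of_typeCount_eq_zero (h : ∀ i, typeCount C i = 0) : C = ∅ :=
  eq_empty_of_forall_notMem fun _ ha => (typeCount_corank_pos ha).ne' (h _)

namespace IsConfig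

lemma pair_subset (hC : IsConfig U C) (ha : a ∈ C) : pair a ⊆ C := by
  simp [pair, insert_subset_iff, ha, hC.hat_mem a ha]

lemma typeCount_eq_add (hC : IsConfig U C) (ha : a ∈ C) (i : ℕ) :
    typeCount C i = typeCount (pair a) i + typeCount (C \ pair a) i := by
  rw [← typeCount_union disjoint_sdiff, union_sdiff_of_subset (hC.pair_subset ha)]

lemma typeCount_eq_zero (hC : IsConfig U C) {i : ℕ} (hi : i ∉ Icc 1 U.card) :
    typeCount C i = 0 := by
  refine card_eq_zero.2 (filter_eq_empty_iff.2 fun a ha hai => hi (mem_Icc.2 ⟨?_, ?_⟩))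
  · exact hai ▸ Nat.one_le_iff_ne_zero.2 (corank_ne_zero (hC.ne_top a ha))
  · exact hai ▸ card_le_card (hC.supp_subset a ha)

lemma sdiff_pair (hC : IsConfig U C) (ha : a ∈ C) : IsConfig (U \ supp a) (C \ pair a) := by
  have hmem : ∀ b ∈ C \ pair a, b ∈ C ∧ b ≠ a ∧ b ≠ hat a := fun b hb => by
    simpa [mem_pair, not_or] using hb
  refine ⟨fun b hb => hC.ne_top b (hmem b hb).1, fun b hb => ?_, fun b hb => ?_,
    fun b hb c hc => hC.disjoint b (hmem b hb).1 c (hmem c hc).1⟩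
  · obtain ⟨hbC, hba, hba'⟩ := hmem b hb
    exact subset_sdiff.2 ⟨hC.supp_subset b hbC, (hC.disjoint a ha b hbC hba hba').symm⟩
  · obtain ⟨hbC, hba, hba'⟩ := hmem b hb
    simp only [mem_sdiff, mem_pair, not_or]
    exact ⟨hC.hat_mem b hbC, fun h => hba' (by rw [← h, hat_hat]), fun h => hba (by
      rw [← hat_hat b, h, hat_hat])⟩

lemma disjoint_pair (hD : IsConfig (U \ supp a) D) (ha : a ≠ ⊤) : Disjoint (pair a) D := by
  refine disjoint_left.2 fun b hb hbD => ?_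
  have hsupp : supp b = supp a := by rcases mem_pair.1 hb with rfl | rfl <;> simp
  obtain ⟨j, hj⟩ := supp_nonempty_iff.2 ha
  exact (mem_sdiff.1 (hD.supp_subset b hbD (hsupp ▸ hj))).2 hj

lemma pair_union (hD : IsConfig (U \ supp a) D) (ha : a ≠ ⊤) (haU : supp a ⊆ U) :
    IsConfig U (pair a ∪ D) := by
  have hsupp : ∀ b ∈ pair a, supp b = supp a := fun b hb => by
    rcases mem_pair.1 hb with rfl | rfl <;> simp
  have hdisj : ∀ b ∈ pair a, ∀ c ∈ D, Disjoint (supp b) (supp c) := fun b hb c hc =>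
    hsupp b hb ▸ (subset_sdiff.1 (hD.supp_subset c hc)).2.symm
  refine ⟨fun b hb => ?_, fun b hb => ?_, fun b hb => ?_, fun b hb c hc hcb hcb' => ?_⟩
  · rcases mem_union.1 hb with hb | hb
    · rcases mem_pair.1 hb with rfl | rfl <;> simpa using ha
    · exact hD.ne_top b hb
  · rcases mem_union.1 hb with hb | hb
    · exact hsupp b hb ▸ haU
    · exact (hD.supp_subset b hb).trans sdiff_subset
  · rcases mem_union.1 hb with hb | hb
    · rcases mem_pair.1 hb with rfl | rfl <;> simp [pair]
    · exact mem_union_right _ (hD.hat_mem b hb)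
  · rcases mem_union.1 hb with hb | hb <;> rcases mem_union.1 hc with hc | hc
    · rcases mem_pair.1 hb with rfl | rfl <;> rcases mem_pair.1 hc with rfl | rfl <;> simp_all
    · exact hdisj b hb c hc
    · exact (hdisj c hc b hb).symm
    · exact hD.disjoint b hb c hc hcb hcb'

lemma image (hC : IsConfig U C) {φ : Cube n ≃o Cube n} (hφ : IsAut φ)
    (hU : ∀ x, supp x ⊆ U → supp (φ x) ⊆ U) : IsConfig U (C.image φ) := by
  refine ⟨?_, ?_, ?_, ?_⟩ <;> simp only [mem_image, forall_exists_index, and_imp,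
    forall_apply_eq_imp_iff₂]
  · exact fun a ha => by simpa using hC.ne_top a ha
  · exact fun a ha => hU a (hC.supp_subset a ha)
  · exact fun a ha => ⟨hat a, hC.hat_mem a ha, hφ.map_hat a⟩
  · intro a ha b hb hba hba'
    rw [Ne, φ.apply_eq_iff_eq] at hba
    rw [Ne, ← hφ.map_hat, φ.apply_eq_iff_eq] at hba'
    have := disjoint_supp_iff.1 (hC.disjoint a ha b hb hba hba')
    rw [disjoint_supp_iff, ← hφ.map_hat, ← φ.map_sup, ← φ.map_sup, this.1, this.2, φ.map_top]
    exact ⟨rfl, rfl⟩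

end IsConfig

theorem IsConfig.exists_isAut_image_eq {C₁ C₂ : Finset (Cube n)}
    (h₁ : IsConfig U C₁) (h₂ : IsConfig U C₂) (h : ∀ i, typeCount C₁ i = typeCount C₂ i) :
    ∃ φ, IsAut φ ∧ (∀ x, Disjoint (supp x) U → φ x = x) ∧ C₁.image φ = C₂ := by
  induction C₂ using Finset.strongInduction generalizing U C₁ with
  | H C₂ ih =>
  rcases C₂.eq_empty_or_nonempty with rfl | ⟨b, hb⟩
  · have : C₁ = ∅ := eq_empty_of_typeCount_eq_zero fun i => (h i).trans (by simp [typeCount])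
    exact ⟨OrderIso.refl _, fun _ _ _ => rfl, fun _ _ => rfl, by simp [this]⟩
  -- Move some `a ∈ C₁` onto `b`, then match the rest inside the coordinates `b` leaves free.
  obtain ⟨a, ha, hab⟩ := exists_mem_corank_eq (h _ ▸ typeCount_corank_pos hb)
  obtain ⟨φ₀, hφ₀, hfix₀, rfl⟩ :=
    exists_isAut_apply_eq (h₁.supp_subset a ha) (h₂.supp_subset b hb) hab
  have h₁' : IsConfig U (C₁.image φ₀) := h₁.image hφ₀ fun x => supp_map_subset hfix₀
  have ha' : φ₀ a ∈ C₁.image φ₀ := mem_image_of_mem _ ha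
  obtain ⟨φ₁, hφ₁, hfix₁, himg⟩ := ih _ (sdiff_ssubset (h₂.pair_subset hb) (by simp [pair]))
    (h₁'.sdiff_pair ha') (h₂.sdiff_pair hb) fun i => by
      have := h₁'.typeCount_eq_add ha' i
      rw [typeCount_image, h, h₂.typeCount_eq_add hb i] at this
      omega
  have hpair : (pair (φ₀ a)).image φ₁ = pair (φ₀ a) := by
    have hfix : ∀ x, supp x = supp (φ₀ a) → φ₁ x = x := fun x hx =>
      hfix₁ x (hx ▸ disjoint_sdiff)
    simp [pair, hfix]
  refine ⟨φ₀.trans φ₁, hφ₀.trans hφ₁, fun x hx => ?_, ?_⟩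
  · rw [OrderIso.trans_apply, hfix₀ x hx, hfix₁ x (hx.mono_right sdiff_subset)]
  · rw [OrderIso.coe_trans, ← image_image, ← union_sdiff_of_subset (h₁'.pair_subset ha'),
      image_union, hpair, himg, union_sdiff_of_subset (h₂.pair_subset hb)]

end Configurations

section Counting

open Finset Nat

variable {n : ℕ} {U : Finset (Fin n)} {C D : Finset (Cube n)} {a : Cube n}

open scoped Classical in
noncomputable def configs (U : Finset (Fin n)) (t : ℕ → ℕ) : Finset (Finset (Cube n)) :=
  {C | IsConfig U C ∧ ∀ i, typeCount C i = 2 * t i}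

lemma mem_configs {t : ℕ → ℕ} : C ∈ configs U t ↔ IsConfig U C ∧ ∀ i, typeCount C i = 2 * t i := by
  simp [configs]

lemma configs_zero (U : Finset (Fin n)) : configs U 0 = {∅} := by
  ext C
  simp only [mem_configs, Pi.zero_apply, mul_zero, mem_singleton]
  refine ⟨fun h => eq_empty_of_typeCount_eq_zero h.2, ?_⟩
  rintro rfl
  exact ⟨⟨by simp, by simp, by simp, by simp⟩, fun i => by simp [typeCount]⟩

lemma typeCount_pair_union_iff {t : ℕ → ℕ} (hD : Disjoint (pair a) D) (ha : a ≠ ⊤)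
    (ht : t (corank a) ≠ 0) :
    (∀ i, typeCount (pair a ∪ D) i = 2 * t i) ↔
      ∀ i, typeCount D i = 2 * Function.update t (corank a) (t (corank a) - 1) i := by
  simp only [typeCount_union hD, typeCount_pair ha]
  refine forall_congr' fun i => ?_
  by_cases h : corank a = i
  · subst h
    simp only [if_true, Function.update_self]
    omega
  · simp [h, Function.update_of_ne (Ne.symm h)]

noncomputable def facesIn (U : Finset (Fin n)) (i : ℕ) : Finset (Cube n) :=
  {a | corank a = i ∧ supp a ⊆ U}

lemma mem_facesIn {i : ℕ} : a ∈ facesIn U i ↔ corank a = i ∧ supp a ⊆ U := by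
  simp [facesIn]

lemma card_facesIn (U : Finset (Fin n)) (i : ℕ) : #(facesIn U i) = 2 ^ i * U.card.choose i := by
  have hsupp : ∀ {S P : Finset (Fin n)}, P ⊆ S → supp ⟨P, S \ P, disjoint_sdiff⟩ = S :=
    fun h => union_sdiff_of_subset h
  calc #(facesIn U i) = #((U.powersetCard i).sigma powerset) := by
        refine card_nbij' (fun a => ⟨supp a, a.pos⟩) (fun p => ⟨p.2, p.1 \ p.2, disjoint_sdiff⟩)
          (fun a ha => ?_) (fun p hp => ?_) (fun a _ => ?_) (fun p hp => ?_)
        · rw [mem_coe, mem_facesIn, corank_eq_card_supp] at ha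
          simpa [mem_powersetCard, and_comm, supp] using ha
        · simp only [coe_sigma, Set.mem_sigma_iff, mem_coe, mem_powersetCard, mem_powerset] at hp
          rw [mem_coe, mem_facesIn, corank_eq_card_supp, hsupp hp.2]
          exact hp.1.symm
        · ext : 1
          · rfl
          · simp [supp, union_sdiff_left, sdiff_eq_self_of_disjoint a.disj.symm]
        · simp only [coe_sigma, Set.mem_sigma_iff, mem_coe, mem_powersetCard, mem_powerset] at hp
          exact Sigma.ext (hsupp hp.2) HEq.rfl
    _ = ∑ _S ∈ U.powersetCard i, 2 ^ i := by
        rw [card_sigma]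
        exact sum_congr rfl fun S hS => by rw [card_powerset, (mem_powersetCard.1 hS).2]
    _ = 2 ^ i * U.card.choose i := by rw [sum_const, card_powersetCard, smul_eq_mul, mul_comm]

lemma card_configs_mul {t : ℕ → ℕ} {i : ℕ} (hi : i ≠ 0) (ht : t i ≠ 0) :
    #(configs U t) * (2 * t i) =
      ∑ a ∈ facesIn U i, #(configs (U \ supp a) (Function.update t i (t i - 1))) := by
  rw [← sum_const_nat fun C hC => (mem_configs.1 hC).2 i]
  simp only [typeCount]
  rw [← card_sigma, ← card_sigma]
  refine card_nbij' (fun p => ⟨p.2, p.1 \ pair p.2⟩) (fun q => ⟨pair q.1 ∪ q.2, q.1⟩) ?_ ?_ ?_ ?_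
  · rintro ⟨C, a⟩ h
    simp only [coe_sigma, Set.mem_sigma_iff, mem_coe, mem_filter, mem_configs, mem_facesIn] at h ⊢
    obtain ⟨⟨hC, htC⟩, haC, rfl⟩ := h
    refine ⟨⟨rfl, hC.supp_subset a haC⟩, hC.sdiff_pair haC, ?_⟩
    rw [← typeCount_pair_union_iff disjoint_sdiff (hC.ne_top a haC) ht,
      union_sdiff_of_subset (hC.pair_subset haC)]
    exact htC
  · rintro ⟨a, D⟩ h
    simp only [coe_sigma, Set.mem_sigma_iff, mem_coe, mem_filter, mem_configs, mem_facesIn] at h ⊢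
    obtain ⟨⟨rfl, haU⟩, hD, htD⟩ := h
    have ha : a ≠ ⊤ := by rintro rfl; exact hi rfl
    exact ⟨⟨hD.pair_union ha haU, (typeCount_pair_union_iff (hD.disjoint_pair ha) ha ht).2 htD⟩,
      mem_union_left _ (by simp [pair]), rfl⟩
  · rintro ⟨C, a⟩ h
    simp only [coe_sigma, Set.mem_sigma_iff, mem_coe, mem_filter, mem_configs] at h
    simp [union_sdiff_of_subset (h.1.1.pair_subset h.2.1)]
  · rintro ⟨a, D⟩ h
    simp only [coe_sigma, Set.mem_sigma_iff, mem_coe, mem_configs, mem_facesIn] at h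
    have ha : a ≠ ⊤ := by rintro rfl; exact hi h.1.1.symm
    simp [union_sdiff_cancel_left (h.2.1.disjoint_pair ha)]

lemma sum_mul_update_pred {s : Finset ℕ} {t : ℕ → ℕ} {i : ℕ} (hi : i ∈ s) (hti : t i ≠ 0)
    (g : ℕ → ℕ) :
    ∑ j ∈ s, g j * t j = ∑ j ∈ s, g j * Function.update t i (t i - 1) j + g i := by
  obtain ⟨m, hm⟩ := Nat.exists_eq_add_one.2 (Nat.pos_of_ne_zero hti)
  rw [sum_apply_update hi (fun j x => g j * x), ← add_sum_erase s _ hi, hm, Nat.add_sub_cancel]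
  ring

lemma prod_factorial_update_pred {s : Finset ℕ} {t : ℕ → ℕ} {i : ℕ} (hi : i ∈ s) (hti : t i ≠ 0) :
    ∏ j ∈ s, (j ! ^ t j * (t j)!) =
      (∏ j ∈ s, (j ! ^ Function.update t i (t i - 1) j * (Function.update t i (t i - 1) j)!)) *
        (i ! * t i) := by
  obtain ⟨m, hm⟩ := Nat.exists_eq_add_one.2 (Nat.pos_of_ne_zero hti)
  rw [prod_apply_update hi (fun j x => j ! ^ x * x !), ← mul_prod_erase s _ hi, hm,
    Nat.add_sub_cancel, Nat.factorial_succ, pow_succ]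
  ring

theorem card_configs_mul_prod {s : Finset ℕ} (hs : 0 ∉ s) {t : ℕ → ℕ} (ht : ∀ i ∉ s, t i = 0)
    (U : Finset (Fin n)) :
    #(configs U t) * (∏ i ∈ s, (i ! ^ t i * (t i)!)) * 2 ^ (∑ i ∈ s, t i) =
      2 ^ (∑ i ∈ s, i * t i) * U.card.descFactorial (∑ i ∈ s, i * t i) := by
  induction hk : ∑ i ∈ s, t i generalizing t U with
  | zero =>
    obtain rfl : t = 0 := funext fun i => by
      by_cases hi : i ∈ s
      · exact sum_eq_zero_iff.1 hk i hi
      · exact ht i hi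
    simp [configs_zero]
  | succ k ih =>
    obtain ⟨i, hi, hti⟩ : ∃ i ∈ s, t i ≠ 0 := by
      by_contra! h
      rw [sum_eq_zero h] at hk
      exact k.succ_ne_zero hk.symm
    set t' := Function.update t i (t i - 1) with ht'_def
    have ht' : ∀ j ∉ s, t' j = 0 := fun j hj => by
      rw [ht'_def, Function.update_of_ne (by rintro rfl; exact hj hi), ht j hj]
    have hk' : ∑ j ∈ s, t' j = k := by
      have := sum_mul_update_pred hi hti fun _ => 1
      simp only [one_mul, ← ht'_def] at this
      omega
    have hr : ∑ j ∈ s, j * t j = ∑ j ∈ s, j * t' j + i := sum_mul_update_pred hi hti id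
    have hprod := prod_factorial_update_pred hi hti
    set r' := ∑ j ∈ s, j * t' j
    have hIH : ∀ a ∈ facesIn U i, #(configs (U \ supp a) t') *
        (∏ j ∈ s, (j ! ^ t' j * (t' j)!)) * 2 ^ k = 2 ^ r' * (U.card - i).descFactorial r' :=
      fun a ha => by
        rw [ih ht' _ hk', card_sdiff_of_subset (mem_facesIn.1 ha).2, ← corank_eq_card_supp,
          (mem_facesIn.1 ha).1]
    rw [hr]
    calc #(configs U t) * (∏ j ∈ s, (j ! ^ t j * (t j)!)) * 2 ^ (k + 1)
        = #(configs U t) * (2 * t i) * (∏ j ∈ s, (j ! ^ t' j * (t' j)!)) * 2 ^ k * i ! := by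
          rw [hprod, pow_succ]
          ring
      _ = (∑ a ∈ facesIn U i, #(configs (U \ supp a) t') *
            (∏ j ∈ s, (j ! ^ t' j * (t' j)!)) * 2 ^ k) * i ! := by
          rw [card_configs_mul (ne_of_mem_of_not_mem hi hs) hti, sum_mul, sum_mul]
      _ = #(facesIn U i) * (2 ^ r' * (U.card - i).descFactorial r') * i ! := by
          rw [sum_congr rfl hIH, sum_const, smul_eq_mul]
      _ = 2 ^ (r' + i) * ((U.card - i).descFactorial (r' + i - i) * U.card.descFactorial i) := by
          rw [card_facesIn, Nat.descFactorial_eq_factorial_mul_choose U.card i, Nat.add_sub_cancel]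
          ring
      _ = 2 ^ (r' + i) * U.card.descFactorial (r' + i) := by
          rw [Nat.descFactorial_mul_descFactorial (Nat.le_add_left i r')]

end Counting

section Orbit

open Finset

variable {n : ℕ} {A : Set (Cube n)}

open scoped Classical in
noncomputable def coAtFinset (A : Set (Cube n)) : Finset (Cube n) := {a | a ∈ coAt A}

@[simp] lemma mem_coAtFinset {a : Cube n} : a ∈ coAtFinset A ↔ a ∈ coAt A := by
  simp [coAtFinset]

lemma coe_coAtFinset (A : Set (Cube n)) : (coAtFinset A : Set (Cube n)) = coAt A :=
  Set.ext fun _ => mem_coAtFinset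

lemma coAtFinset_image (φ : Cube n ≃o Cube n) (A : Set (Cube n)) :
    coAtFinset (φ '' A) = (coAtFinset A).image φ :=
  coe_injective (by rw [coe_image, coe_coAtFinset, coe_coAtFinset, coAt_image])

lemma typeCount_coAtFinset (A : Set (Cube n)) (i : ℕ) :
    typeCount (coAtFinset A) i = (typeSet A i).ncard := by
  rw [typeCount, ← Set.ncard_coe_finset, coe_filter]
  congr 1
  ext a
  simp [typeSet, ncard_coatomsAbove]

lemma IsMRSub.isConfig_coAtFinset (hA : IsMRSub A) : IsConfig univ (coAtFinset A) := by
  refine ⟨fun a ha => (mem_coAtFinset.1 ha).2.1, fun _ _ => subset_univ _,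
    fun a ha => mem_coAtFinset.2 (hA.hat_mem_coAt (mem_coAtFinset.1 ha)),
    fun a ha b hb => hA.disjoint_supp_of_mem_coAt (mem_coAtFinset.1 ha) (mem_coAtFinset.1 hb)⟩

theorem IsMRSub.ncard_orbit (hA : IsMRSub A) {t : ℕ → ℕ}
    (ht : ∀ i, typeCount (coAtFinset A) i = 2 * t i) :
    {S : Set (Cube n) | ∃ φ ∈ AutSet n, φ '' A = S}.ncard =
      #(configs (univ : Finset (Fin n)) t) := by
  set O := {S : Set (Cube n) | ∃ φ ∈ AutSet n, φ '' A = S}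
  have hmr : ∀ S ∈ O, IsMRSub S := by
    rintro _ ⟨φ, hφ, rfl⟩
    exact hA.image hφ
  have hinj : Set.InjOn coAtFinset O := fun S hS T hT hST =>
    (hmr S hS).eq_of_coAt_eq (hmr T hT) (by rw [← coe_coAtFinset, hST, coe_coAtFinset])
  have himg : coAtFinset '' O = ↑(configs (univ : Finset (Fin n)) t) := by
    ext C
    constructor
    · rintro ⟨_, ⟨φ, hφ, rfl⟩, rfl⟩
      rw [mem_coe, mem_configs, coAtFinset_image]
      exact ⟨hA.isConfig_coAtFinset.image hφ fun _ _ => subset_univ _,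
        fun i => by rw [typeCount_image, ht]⟩
    · intro hC
      obtain ⟨hC, htC⟩ := mem_configs.1 hC
      obtain ⟨φ, hφ, -, hφC⟩ := hA.isConfig_coAtFinset.exists_isAut_image_eq hC
        fun i => by rw [ht, htC]
      exact ⟨φ '' A, ⟨φ, hφ, rfl⟩, by rw [coAtFinset_image, hφC]⟩
  rw [← hinj.ncard_image, himg, Set.ncard_coe_finset]

end Orbit

end Cube

open Cube Finset in
theorem orbit_card_general (n : ℕ) (A : Set (Cube n)) (hA : Cube.IsMRSub A)
    (t : ℕ → ℕ) (ht : ∀ i, 2 * t i = (Cube.typeSet A i).ncard)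
    (k r : ℕ) (hk : k = ∑ i ∈ Finset.Icc 1 n, t i)
    (hr : r = ∑ i ∈ Finset.Icc 1 n, i * t i) :
    ({S : Set (Cube n) | ∃ φ ∈ Cube.AutSet n, φ '' A = S}).ncard *
        ∏ i ∈ Finset.Icc 1 n, (Nat.factorial i ^ t i * Nat.factorial (t i)) =
      2 ^ (r - k) * Nat.choose n r * Nat.factorial r := by
  have htype : ∀ i, typeCount (coAtFinset A) i = 2 * t i := fun i => by
    rw [typeCount_coAtFinset, ht]
  have hsupp : ∀ i ∉ Icc 1 n, t i = 0 := fun i hi => by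
    have := hA.isConfig_coAtFinset.typeCount_eq_zero (i := i) (by simpa using hi)
    rw [htype] at this
    omega
  have hkr : k ≤ r := hk ▸ hr ▸ sum_le_sum fun i hi => Nat.le_mul_of_pos_left _ (mem_Icc.1 hi).1
  have hcount := card_configs_mul_prod (by simp) hsupp (univ : Finset (Fin n))
  rw [← hA.ncard_orbit htype, ← hk, ← hr, card_univ, Fintype.card_fin,
    Nat.descFactorial_eq_factorial_mul_choose, ← Nat.sub_add_cancel hkr, pow_add] at hcount
  apply Nat.eq_of_mul_eq_mul_right (pow_pos two_pos k)
  rw [hcount, Nat.sub_add_cancel hkr]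
  ring

/-- The orbit of an MR-subalgebra `A` of `𝓛ₙ` under the evaluation action of
`Aut(𝓛ₙ)` satisfies `|Orb(A)| · ∏ᵢ (i!)^{tᵢ} tᵢ! = 2^{r-k} C(n,r) r!`. -/
theorem orbit_card (n : ℕ) (hn : 1 ≤ n) (A : Set (Cube n)) (hA : Cube.IsMRSub A)
    (t : ℕ → ℕ) (ht : ∀ i, 2 * t i = (Cube.typeSet A i).ncard)
    (k r : ℕ) (hk : k = ∑ i ∈ Finset.Icc 1 n, t i)
    (hr : r = ∑ i ∈ Finset.Icc 1 n, i * t i) :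
    ({S : Set (Cube n) | ∃ φ ∈ Cube.AutSet n, φ '' A = S}).ncard *
        ∏ i ∈ Finset.Icc 1 n, (Nat.factorial i ^ t i * Nat.factorial (t i)) =
      2 ^ (r - k) * Nat.choose n r * Nat.factorial r :=
  orbit_card_general n A hA t ht k r hk hr
end

section
/- Let P be a partition of the set of coatoms of 𝓛ₙ such that each block X ∈ P is closed under the sign-flip c ↦ Δ(𝟙,c) (hence each |X| is even). Let Aut_P = {φ ∈ Aut(𝓛ₙ) : φ[X] = X for all X ∈ P}. Then Aut_P is isomorphic, as a group, to the product ∏_{X ∈ P} Aut(𝓛_{|X|/2}). -/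
namespace Cube

lemma isAut_one (n : ℕ) : IsAut (1 : Cube n ≃o Cube n) := fun _ _ _ => rfl

lemma isAut_mul {n : ℕ} {f g : Cube n ≃o Cube n} (hf : IsAut f) (hg : IsAut g) :
    IsAut (f * g) := by
  intro x y h
  have : (f * g) (delta x y) = f (g (delta x y)) := rfl
  rw [this, hg x y h, hf (g x) (g y) (g.monotone h)]
  rfl

lemma isAut_inv {n : ℕ} {f : Cube n ≃o Cube n} (hf : IsAut f) : IsAut f⁻¹ := by
  have hsymm : (f⁻¹ : Cube n ≃o Cube n) = f.symm := rfl
  rw [hsymm]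
  intro x y h
  apply f.injective
  have h' : f.symm y ≤ f.symm x := f.symm.monotone h
  have := hf (f.symm x) (f.symm y) h'
  calc f (f.symm (delta x y)) = delta x y := f.apply_symm_apply _
    _ = delta (f (f.symm x)) (f (f.symm y)) := by
        rw [f.apply_symm_apply, f.apply_symm_apply]
    _ = f (delta (f.symm x) (f.symm y)) := this.symm

/-- The automorphism group of `𝓛ₙ`, as a subgroup of the order automorphisms. -/
def autGroup (n : ℕ) : Subgroup (Cube n ≃o Cube n) where
  carrier := AutSet n
  one_mem' := isAut_one n
  mul_mem' := isAut_mul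
  inv_mem' := isAut_inv

/-- The subgroup of automorphisms of `𝓛ₙ` fixing (setwise) every block of a
family `P` of sets of faces. -/
def autGroupP (n : ℕ) (P : Set (Set (Cube n))) : Subgroup (Cube n ≃o Cube n) where
  carrier := {φ | IsAut φ ∧ ∀ X ∈ P, φ '' X = X}
  one_mem' := ⟨isAut_one n, fun X _ => by simp⟩
  mul_mem' := by
    rintro f g ⟨hf, hf'⟩ ⟨hg, hg'⟩
    refine ⟨isAut_mul hf hg, fun X hX => ?_⟩
    have : (⇑(f * g) : Cube n → Cube n) = f ∘ g := rfl
    rw [this, Set.image_comp, hg' X hX, hf' X hX]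
  inv_mem' := by
    rintro f ⟨hf, hf'⟩
    refine ⟨isAut_inv hf, fun X hX => ?_⟩
    have h1 : (⇑(f⁻¹ : Cube n ≃o Cube n) : Cube n → Cube n) = ⇑f.symm := rfl
    rw [h1]
    conv_lhs => rw [← hf' X hX]
    rw [Set.image_image]
    simp

end Cube

/-!
A face of `𝓛ₙ` is determined by the coatoms above it, and the coatoms are the literals
`(i, b) : Fin n × Bool`. Hence an order automorphism is determined by the permutation of the `2n`
literals it induces, and the automorphisms induce exactly the permutations commuting with the sign
flip `(i, b) ↦ (i, !b)`, which is how `Δ(𝟙, ·)` acts on coatoms. Stabilizing every block of `P` means preserving the map sending a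
literal to its block, and a flip-commuting permutation that does so is the same as a family of
flip-commuting permutations of the blocks. Finally, fixed-point-free involutions of a finite set
are all conjugate, so a block of size `2m` with the flip is equivariantly `Fin m × Bool`, and its
factor is `Aut(𝓛ₘ)`.
-/

open Equiv Subgroup

theorem Subgroup.map_equiv_centralizer_singleton {G G' : Type*} [Group G] [Group G']
    (ψ : G ≃* G') (g : G) : (centralizer {g}).map (ψ : G →* G') = centralizer {ψ g} := by
  ext k
  rw [map_equiv_eq_comap_symm, mem_comap, mem_centralizer_singleton_iff,
    mem_centralizer_singleton_iff, ← ψ.injective.eq_iff]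
  simp

namespace Equiv.Perm

variable {α β γ ι : Type*}

def centralizerCongr {J : Perm β} {K : Perm γ} (E : β ≃ γ) (hE : ∀ b, E (J b) = K (E b)) :
    centralizer {J} ≃* centralizer {K} :=
  (E.permCongrHom.subgroupMap _).trans <| MulEquiv.subgroupCongr <| by
    rw [map_equiv_centralizer_singleton]
    congr
    ext c
    simp [Equiv.permCongrHom_coe, Equiv.permCongr_apply, hE]

theorem card_eq_two_mul_card_cycleType [Fintype β] [DecidableEq β] {J : Perm β}
    (hJ : Function.Involutive J) (hfix : ∀ b, J b ≠ b) :
    Fintype.card β = 2 * J.cycleType.card := by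
  have hsum : J.cycleType.sum = Fintype.card β := by
    rw [sum_cycleType, Finset.card_eq_iff_eq_univ, Finset.eq_univ_iff_forall]
    exact fun b => mem_support.mpr (hfix b)
  rw [← hsum, cycleType_of_pow_prime_eq_one (Equiv.ext hJ : J ^ 2 = 1)]
  simp [mul_comm]

theorem isConj_of_involutive_of_fixedPointFree [Finite β] {J K : Perm β}
    (hJ : Function.Involutive J) (hJfix : ∀ b, J b ≠ b)
    (hK : Function.Involutive K) (hKfix : ∀ b, K b ≠ b) : IsConj J K := by
  classical
  have := Fintype.ofFinite β
  have hJK := (card_eq_two_mul_card_cycleType hJ hJfix).symm.trans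
    (card_eq_two_mul_card_cycleType hK hKfix)
  rw [isConj_iff_cycleType_eq, cycleType_of_pow_prime_eq_one (Equiv.ext hJ : J ^ 2 = 1),
    cycleType_of_pow_prime_eq_one (Equiv.ext hK : K ^ 2 = 1)]
  congr 1
  omega

def fiberStabilizer (f : α → ι) : Subgroup (Perm α) where
  carrier := {e | ∀ a, f (e a) = f a}
  one_mem' _ := rfl
  mul_mem' he hf a := (he _).trans (hf a)
  inv_mem' {e} he a := by simpa using (he (e⁻¹ a)).symm

variable {f : α → ι}

theorem image_fiber {e : Perm α} (he : e ∈ fiberStabilizer f) (i : ι) :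
    e '' {a | f a = i} = {a | f a = i} := by
  ext a
  rw [Equiv.image_eq_preimage_symm]
  exact iff_of_eq (congrArg (· = i) ((inv_mem he) a))

def restrictFiber {e : Perm α} (he : ∀ a, f (e a) = f a) (i : ι) : Perm {a // f a = i} :=
  e.subtypePerm fun a => by rw [he]

def ofFibers (g : ∀ i, Perm {a // f a = i}) : Perm α :=
  (sigmaFiberEquiv f).permCongr (sigmaCongrRight g)

theorem ofFibers_apply_of_eq (g : ∀ i, Perm {a // f a = i}) {a : α} {i : ι} (h : f a = i) :
    ofFibers g a = g i ⟨a, h⟩ := by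
  subst h
  rfl

theorem ofFibers_mem_fiberStabilizer (g : ∀ i, Perm {a // f a = i}) :
    ofFibers g ∈ fiberStabilizer f := fun a => by
  rw [ofFibers_apply_of_eq g rfl]
  exact (g (f a) ⟨a, rfl⟩).2

theorem restrictFiber_ofFibers (g : ∀ i, Perm {a // f a = i}) (i : ι) :
    restrictFiber (ofFibers_mem_fiberStabilizer g) i = g i := by
  ext ⟨a, ha⟩
  exact ofFibers_apply_of_eq g ha

variable {J : Perm α} (hJ : ∀ a, f (J a) = f a)

theorem restrictFiber_mem_centralizer {e : Perm α} (he : e ∈ centralizer {J})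
    (hef : ∀ a, f (e a) = f a) (i : ι) :
    restrictFiber hef i ∈ centralizer {restrictFiber hJ i} := by
  rw [mem_centralizer_singleton_iff] at he ⊢
  ext ⟨a, _⟩
  exact congrArg (· a) he

theorem ofFibers_mem_centralizer (g : ∀ i, centralizer {restrictFiber hJ i}) :
    ofFibers (fun i => (g i).1) ∈ centralizer {J} := by
  rw [mem_centralizer_singleton_iff]
  ext a
  have hg := congrArg (fun σ : Perm {b // f b = f a} => (σ ⟨a, rfl⟩ : α))
    (mem_centralizer_singleton_iff.mp (g (f a)).2)
  simp only [Perm.mul_apply] at hg ⊢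
  rw [ofFibers_apply_of_eq _ (hJ a), ofFibers_apply_of_eq _ rfl]
  exact hg

noncomputable def centralizerInfFiberStabilizerEquiv :
    (centralizer {J} ⊓ fiberStabilizer f : Subgroup (Perm α)) ≃*
      ∀ i, centralizer {restrictFiber hJ i} :=
  MulEquiv.ofBijective
    (MonoidHom.mk' (fun e i =>
      ⟨restrictFiber e.2.2 i, restrictFiber_mem_centralizer hJ e.2.1 e.2.2 i⟩) fun _ _ => rfl)
    ⟨fun _ _ h => Subtype.ext <| Equiv.ext fun a =>
        congrArg (fun g => ((g (f a)).1 ⟨a, rfl⟩ : α)) h,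
      fun g => ⟨⟨ofFibers (fun i => (g i).1),
        ofFibers_mem_centralizer hJ g, ofFibers_mem_fiberStabilizer _⟩,
        funext fun i => Subtype.ext (restrictFiber_ofFibers _ i)⟩⟩

end Equiv.Perm

namespace Cube

variable {n : ℕ}

lemma le_iff {x y : Cube n} : x ≤ y ↔ y.pos ⊆ x.pos ∧ y.neg ⊆ x.neg := Iff.rfl

def signFlip (n : ℕ) : Perm (Fin n × Bool) :=
  (Equiv.refl _).prodCongr (Function.Involutive.toPerm _ Bool.not_not)

@[simp] lemma signFlip_apply (p : Fin n × Bool) : signFlip n p = (p.1, !p.2) := rfl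

lemma signFlip_involutive : Function.Involutive (signFlip n) := fun p => by simp

lemma signFlip_ne (p : Fin n × Bool) : signFlip n p ≠ p := by
  simp [Prod.ext_iff]

def literals (x : Cube n) : Finset (Fin n × Bool) :=
  x.pos.image (·, true) ∪ x.neg.image (·, false)

@[simp] lemma mk_true_mem_literals {x : Cube n} {i : Fin n} :
    (i, true) ∈ literals x ↔ i ∈ x.pos := by
  simp [literals]

@[simp] lemma mk_false_mem_literals {x : Cube n} {i : Fin n} :
    (i, false) ∈ literals x ↔ i ∈ x.neg := by
  simp [literals]

lemma literals_injective : Function.Injective (literals (n := n)) := fun x y h => by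
  ext i
  · rw [← mk_true_mem_literals, h, mk_true_mem_literals]
  · rw [← mk_false_mem_literals, h, mk_false_mem_literals]

lemma le_iff_literals_subset {x y : Cube n} : x ≤ y ↔ literals y ⊆ literals x := by
  simp only [le_iff, Finset.subset_iff, Prod.forall, Bool.forall_bool, mk_true_mem_literals,
    mk_false_mem_literals]
  exact ⟨fun h i => ⟨@h.2 i, @h.1 i⟩, fun h => ⟨fun i => (h i).2, fun i => (h i).1⟩⟩

@[simp] lemma literals_top : literals (⊤ : Cube n) = ∅ := rfl

lemma card_literals (x : Cube n) : (literals x).card = corank x := by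
  rw [literals, Finset.card_union_of_disjoint, Finset.card_image_of_injective,
    Finset.card_image_of_injective, corank, Finset.card_union_of_disjoint x.disj]
  all_goals simp [Function.Injective, Finset.disjoint_left]

lemma signFlip_notMem_literals {x : Cube n} {p : Fin n × Bool} (hp : p ∈ literals x) :
    signFlip n p ∉ literals x := by
  obtain ⟨i, _ | _⟩ := p <;> simp only [signFlip_apply, Bool.not_false, Bool.not_true,
    mk_true_mem_literals, mk_false_mem_literals] at hp ⊢
  · exact Finset.disjoint_right.mp x.disj hp
  · exact Finset.disjoint_left.mp x.disj hp

def ofLiterals (S : Finset (Fin n × Bool)) (hS : ∀ p ∈ S, signFlip n p ∉ S) : Cube n :=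
  ⟨{i | (i, true) ∈ S}, {i | (i, false) ∈ S}, Finset.disjoint_left.mpr fun i hi hi' =>
    hS _ (Finset.mem_filter.mp hi).2 (by simpa using (Finset.mem_filter.mp hi').2)⟩

@[simp] lemma literals_ofLiterals (S : Finset (Fin n × Bool)) (hS : ∀ p ∈ S, signFlip n p ∉ S) :
    literals (ofLiterals S hS) = S := by
  ext ⟨i, _ | _⟩ <;> simp [ofLiterals]

lemma literals_delta (x y : Cube n) : literals (delta x y) =
    literals x ∪ ((literals y).image (signFlip n) \ (literals x).image (signFlip n)) := by
  have hflip : ∀ (S : Finset (Fin n × Bool)) p, p ∈ S.image (signFlip n) ↔ signFlip n p ∈ S :=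
    fun S p => by
      conv_lhs => rw [← signFlip_involutive p]
      exact (signFlip n).injective.mem_finset_image
  ext ⟨i, _ | _⟩ <;> simp [delta, hflip]

def coatom (p : Fin n × Bool) : Cube n :=
  ofLiterals {p} fun q hq => by simpa [Finset.mem_singleton.mp hq] using signFlip_ne q

@[simp] lemma literals_coatom (p : Fin n × Bool) : literals (coatom p) = {p} :=
  literals_ofLiterals _ _

lemma coatom_injective : Function.Injective (coatom (n := n)) := fun p q h => by
  simpa using congrArg literals h

lemma le_coatom_iff {x : Cube n} {p : Fin n × Bool} : x ≤ coatom p ↔ p ∈ literals x := by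
  rw [le_iff_literals_subset, literals_coatom, Finset.singleton_subset_iff]

lemma coatom_signFlip (p : Fin n × Bool) : coatom (signFlip n p) = delta ⊤ (coatom p) :=
  literals_injective <| by simp [literals_delta]

lemma isCoatom_coatom (p : Fin n × Bool) : IsCoatom (coatom p) := by
  refine ⟨fun h => by simpa using congrArg literals h, fun y hy => literals_injective ?_⟩
  have hsub : literals y ⊂ {p} := by
    rw [← literals_coatom, Finset.ssubset_iff_subset_ne]
    exact ⟨le_iff_literals_subset.mp hy.le, fun h => hy.ne (literals_injective h).symm⟩
  rwa [literals_top, ← Finset.ssubset_singleton_iff]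

lemma exists_coatom_eq_of_isCoatom {x : Cube n} (hx : IsCoatom x) : ∃ p, coatom p = x := by
  obtain ⟨p, hp⟩ : (literals x).Nonempty := by
    rw [Finset.nonempty_iff_ne_empty, ← literals_top]
    exact literals_injective.ne hx.ne_top
  refine ⟨p, ((hx.le_iff.mp (le_coatom_iff.mpr hp)).resolve_left ?_)⟩
  exact (isCoatom_coatom p).ne_top

lemma corank_eq_one_iff {x : Cube n} : corank x = 1 ↔ x ∈ Set.range coatom := by
  rw [← card_literals, Finset.card_eq_one]
  refine exists_congr fun p => ?_
  rw [← literals_coatom, literals_injective.eq_iff, eq_comm]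

noncomputable def coatomEquiv (n : ℕ) : Fin n × Bool ≃ {x : Cube n // IsCoatom x} :=
  Equiv.ofBijective (fun p => ⟨coatom p, isCoatom_coatom p⟩)
    ⟨fun _ _ h => coatom_injective (congrArg Subtype.val h),
      fun x => (exists_coatom_eq_of_isCoatom x.2).imp fun _ h => Subtype.ext h⟩

noncomputable def coatomPerm : (Cube n ≃o Cube n) →* Perm (Fin n × Bool) where
  toFun φ := (coatomEquiv n).symm.permCongr (Perm.subtypePerm φ.toEquiv φ.isCoatom_iff)
  map_one' := Equiv.ext fun p => by simp [Equiv.permCongr_apply]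
  map_mul' φ ψ := Equiv.ext fun p => by simp [Equiv.permCongr_apply]

lemma coatom_coatomPerm (φ : Cube n ≃o Cube n) (p : Fin n × Bool) :
    coatom (coatomPerm φ p) = φ (coatom p) :=
  congrArg Subtype.val ((coatomEquiv n).apply_symm_apply _)

lemma literals_orderIso_apply (φ : Cube n ≃o Cube n) (x : Cube n) :
    literals (φ x) = (literals x).image (coatomPerm φ) := by
  ext q
  obtain ⟨p, rfl⟩ := (coatomPerm φ).surjective q
  rw [(coatomPerm φ).injective.mem_finset_image, ← le_coatom_iff, ← le_coatom_iff,
    coatom_coatomPerm, φ.le_iff_le]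

lemma coatomPerm_injective : Function.Injective (coatomPerm (n := n)) := fun φ ψ h =>
  RelIso.ext fun x => literals_injective <| by
    rw [literals_orderIso_apply, h, literals_orderIso_apply]

lemma coatomPerm_mem_centralizer {φ : Cube n ≃o Cube n} (hφ : IsAut φ) :
    coatomPerm φ ∈ centralizer {signFlip n} := by
  rw [mem_centralizer_singleton_iff]
  ext p : 1
  apply coatom_injective
  simp only [Perm.mul_apply]
  rw [coatom_coatomPerm, coatom_signFlip, coatom_signFlip, hφ _ _ le_top, map_top,
    coatom_coatomPerm]

section Relabel

variable {e : Perm (Fin n × Bool)} (he : e ∈ centralizer {signFlip n})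
include he

lemma apply_signFlip (p : Fin n × Bool) : e (signFlip n p) = signFlip n (e p) :=
  congrArg (· p) (mem_centralizer_singleton_iff.mp he)

lemma image_image_signFlip_comm (S : Finset (Fin n × Bool)) :
    (S.image (signFlip n)).image e = (S.image e).image (signFlip n) := by
  rw [Finset.image_image, Finset.image_image]
  exact Finset.image_congr fun p _ => apply_signFlip he p

lemma consistent_image_literals (x : Cube n) :
    ∀ p ∈ (literals x).image e, signFlip n p ∉ (literals x).image e := by
  intro q hq hq'
  obtain ⟨p, hp, rfl⟩ := Finset.mem_image.mp hq
  rw [← apply_signFlip he, e.injective.mem_finset_image] at hq'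
  exact signFlip_notMem_literals hp hq'

def relabel : Cube n ≃o Cube n where
  toFun x := ofLiterals ((literals x).image e) (consistent_image_literals he x)
  invFun x := ofLiterals ((literals x).image ⇑(e⁻¹)) (consistent_image_literals (inv_mem he) x)
  left_inv x := literals_injective <| by simp [Finset.image_image]
  right_inv x := literals_injective <| by simp [Finset.image_image]
  map_rel_iff' {x y} := by
    simp only [Equiv.coe_fn_mk, le_iff_literals_subset, literals_ofLiterals,
      Finset.image_subset_image_iff e.injective]

lemma literals_relabel (x : Cube n) : literals (relabel he x) = (literals x).image e :=
  literals_ofLiterals _ (consistent_image_literals he x)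

lemma isAut_relabel : IsAut (relabel he) := fun x y _ => literals_injective <| by
  rw [literals_relabel, literals_delta, literals_delta, Finset.image_union,
    Finset.image_sdiff _ _ e.injective, literals_relabel, literals_relabel,
    image_image_signFlip_comm he, image_image_signFlip_comm he]

lemma coatomPerm_relabel : coatomPerm (relabel he) = e :=
  Equiv.ext fun p => coatom_injective <| literals_injective <| by
    rw [coatom_coatomPerm, literals_relabel, literals_coatom, literals_coatom,
      Finset.image_singleton]

end Relabel

lemma map_coatomPerm_autGroup : (autGroup n).map coatomPerm = centralizer {signFlip n} := by
  ext e
  refine ⟨?_, fun he => ⟨relabel he, isAut_relabel he, coatomPerm_relabel he⟩⟩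
  rintro ⟨φ, hφ, rfl⟩
  exact coatomPerm_mem_centralizer hφ

noncomputable def autGroupEquivCentralizer (n : ℕ) :
    autGroup n ≃* centralizer {signFlip n} :=
  ((autGroup n).equivMapOfInjective _ coatomPerm_injective).trans
    (MulEquiv.subgroupCongr map_coatomPerm_autGroup)

lemma exists_equiv_signFlip {β : Type*} [Finite β] {J : Perm β} (hJ : Function.Involutive J)
    (hfix : ∀ b, J b ≠ b) :
    ∃ E : β ≃ Fin (Nat.card β / 2) × Bool, ∀ b, E (J b) = signFlip _ (E b) := by
  classical
  have := Fintype.ofFinite β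
  have hcard : Fintype.card β = Fintype.card (Fin (Nat.card β / 2) × Bool) := by
    have := Perm.card_eq_two_mul_card_cycleType hJ hfix
    simp only [Nat.card_eq_fintype_card, Fintype.card_prod, Fintype.card_fin, Fintype.card_bool]
    omega
  let E₀ := Fintype.equivOfCardEq hcard
  set J' := E₀.permCongr J
  obtain ⟨c, hc⟩ := isConj_iff.mp <| Perm.isConj_of_involutive_of_fixedPointFree
    (J := J') (fun x => by simp [J', Equiv.permCongr_apply, hJ _])
    (fun x => by
      simpa [J', Equiv.permCongr_apply, ← E₀.eq_symm_apply] using hfix (E₀.symm x))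
    signFlip_involutive signFlip_ne
  refine ⟨E₀.trans c, fun b => ?_⟩
  rw [← hc]
  simp [J', Equiv.permCongr_apply]

theorem nonempty_centralizer_mulEquiv_autGroup {β : Type*} [Finite β] {J : Perm β}
    (hJ : Function.Involutive J) (hfix : ∀ b, J b ≠ b) {m : ℕ} (hm : Nat.card β / 2 = m) :
    Nonempty (centralizer {J} ≃* autGroup m) := by
  subst hm
  obtain ⟨E, hE⟩ := exists_equiv_signFlip hJ hfix
  exact ⟨(Perm.centralizerCongr E hE).trans (autGroupEquivCentralizer _).symm⟩

section Blocks

variable {P : Set (Set (Cube n))}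

lemma exists_blockIndex (hcov : ⋃₀ P = {x : Cube n | corank x = 1})
    (hdisj : ∀ X ∈ P, ∀ Y ∈ P, X ≠ Y → Disjoint X Y) :
    ∃ blk : Fin n × Bool → P, ∀ X : P, (X : Set (Cube n)) = coatom '' {p | blk p = X} := by
  have hcover : ∀ p, ∃ X : P, coatom p ∈ (X : Set (Cube n)) := fun p => by
    have hp : coatom p ∈ ⋃₀ P := by
      rw [hcov]
      exact corank_eq_one_iff.mpr ⟨p, rfl⟩
    obtain ⟨X, hX, hpX⟩ := hp
    exact ⟨⟨X, hX⟩, hpX⟩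
  choose blk hblk using hcover
  have huniq : ∀ p (X : P), coatom p ∈ (X : Set (Cube n)) → blk p = X := fun p X hpX => by
    by_contra hne
    exact Set.disjoint_left.mp (hdisj _ (blk p).2 _ X.2 (Subtype.coe_ne_coe.mpr hne)) (hblk p) hpX
  refine ⟨blk, fun X => Set.ext fun x => ⟨fun hx => ?_, ?_⟩⟩
  · have hx1 : x ∈ {x : Cube n | corank x = 1} := hcov ▸ ⟨X, X.2, hx⟩
    obtain ⟨p, rfl⟩ := corank_eq_one_iff.mp hx1
    exact ⟨p, huniq p X hx, rfl⟩
  · rintro ⟨p, hp, rfl⟩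
    exact (show blk p = X from hp) ▸ hblk p

variable {blk : Fin n × Bool → P}
  (hblk : ∀ X : P, (X : Set (Cube n)) = coatom '' {p | blk p = X})
include hblk

lemma coatom_mem_iff {p : Fin n × Bool} {X : P} :
    coatom p ∈ (X : Set (Cube n)) ↔ blk p = X := by
  rw [hblk X, coatom_injective.mem_set_image]
  rfl

lemma blockIndex_signFlip (hflip : ∀ X ∈ P, ∀ c ∈ X, delta ⊤ c ∈ X) (p : Fin n × Bool) :
    blk (signFlip n p) = blk p := by
  rw [← coatom_mem_iff hblk, coatom_signFlip]
  exact hflip _ (blk p).2 _ ((coatom_mem_iff hblk).mpr rfl)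

lemma nat_card_blockIndex_fiber (X : P) :
    Nat.card {p // blk p = X} = (X : Set (Cube n)).ncard := by
  rw [hblk X, Set.ncard_image_of_injective _ coatom_injective, ← Nat.card_coe_set_eq]
  rfl

lemma map_coatomPerm_autGroupP :
    (autGroupP n P).map coatomPerm = centralizer {signFlip n} ⊓ Perm.fiberStabilizer blk := by
  ext e
  constructor
  · rintro ⟨φ, ⟨hφ, hφP⟩, rfl⟩
    refine ⟨coatomPerm_mem_centralizer hφ, fun p => ?_⟩
    rw [← coatom_mem_iff hblk, coatom_coatomPerm, ← hφP _ (blk p).2]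
    exact Set.mem_image_of_mem φ ((coatom_mem_iff hblk).mpr rfl)
  · rintro ⟨he, heblk⟩
    refine ⟨relabel he, ⟨isAut_relabel he, fun X hX => ?_⟩, coatomPerm_relabel he⟩
    have hcomm : relabel he ∘ coatom = coatom ∘ e := funext fun p => by
      rw [Function.comp_apply, ← coatom_coatomPerm, coatomPerm_relabel]; rfl
    rw [show X = ((⟨X, hX⟩ : P) : Set (Cube n)) from rfl, hblk, ← Set.image_comp, hcomm,
      Set.image_comp, Perm.image_fiber heblk]

end Blocks

end Cube

theorem autGroupP_iso_prod_general (n : ℕ) (P : Set (Set (Cube n)))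
    (hcov : ⋃₀ P = {x : Cube n | Cube.corank x = 1})
    (hdisj : ∀ X ∈ P, ∀ Y ∈ P, X ≠ Y → Disjoint X Y)
    (hflip : ∀ X ∈ P, ∀ c ∈ X, Cube.delta ⊤ c ∈ X) :
    Nonempty
      ((Cube.autGroupP n P) ≃*
        ((X : P) → Cube.autGroup ((X : Set (Cube n)).ncard / 2))) := by
  obtain ⟨blk, hblk⟩ := Cube.exists_blockIndex hcov hdisj
  have hJ := Cube.blockIndex_signFlip hblk hflip
  have hfactor : ∀ X : P, Nonempty (centralizer {Perm.restrictFiber hJ X} ≃*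
      Cube.autGroup ((X : Set (Cube n)).ncard / 2)) := fun X =>
    Cube.nonempty_centralizer_mulEquiv_autGroup
      (fun p => Subtype.ext (Cube.signFlip_involutive p.1))
      (fun p h => Cube.signFlip_ne p.1 (congrArg Subtype.val h))
      (by rw [Cube.nat_card_blockIndex_fiber hblk])
  exact ⟨((Cube.autGroupP n P).equivMapOfInjective _ Cube.coatomPerm_injective).trans <|
    (MulEquiv.subgroupCongr (Cube.map_coatomPerm_autGroupP hblk)).trans <|
    (Perm.centralizerInfFiberStabilizerEquiv hJ).trans <|
    MulEquiv.piCongrRight fun X => (hfactor X).some⟩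

/-- If `P` is a partition of the coatoms of `𝓛ₙ` whose blocks are closed under
the sign-flip `c ↦ Δ(𝟙, c)`, then the group of automorphisms of `𝓛ₙ`
stabilizing every block is isomorphic to `∏_{X ∈ P} Aut(𝓛_{|X|/2})`. -/
theorem autGroupP_iso_prod (n : ℕ) (P : Set (Set (Cube n)))
    (hcov : ⋃₀ P = {x : Cube n | Cube.corank x = 1})
    (hdisj : ∀ X ∈ P, ∀ Y ∈ P, X ≠ Y → Disjoint X Y)
    (hne : ∀ X ∈ P, X.Nonempty)
    (hflip : ∀ X ∈ P, ∀ c ∈ X, Cube.delta ⊤ c ∈ X) :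
    Nonempty
      ((Cube.autGroupP n P) ≃*
        ((X : P) → Cube.autGroup ((X : Set (Cube n)).ncard / 2))) :=
  autGroupP_iso_prod_general n P hcov hdisj hflip
end
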